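/- arXiv:2402.12182 — 8 statements merged into one kernel-verified Lean document; each statement's English description precedes it below -/
import Mathlib

section
/- Let E be a real inner product space, let C ⊆ E be a cone, let y ∈ E, and let ŷ ∈ C satisfy ‖y − ŷ‖ ≤ ‖y − x‖ for all x ∈ C. Then for every x ∈ C with ⟨y, x⟩ = ‖x‖², one has ‖x‖ ≤ ‖ŷ‖; that is, the metric projection maximizes the norm among all points x of C satisfying the orthogonality condition ⟨y, x⟩ = ‖x‖². -/
open RealInnerProductSpace

theorem metric_projection_onto_cone_maximizes_norm
    {E : Type*} [NormedAddCommGroup E] [InnerProductSpace ℝ E]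
    (C : Set E) (hC : ∀ x ∈ C, ∀ t : ℝ, 0 ≤ t → t • x ∈ C)
    (y : E) (yhat : E) (hyhatC : yhat ∈ C)
    (hmin : ∀ x ∈ C, ‖y - yhat‖ ≤ ‖y - x‖) :
    ∀ x ∈ C, ⟪y, x⟫ = ‖x‖ ^ 2 → ‖x‖ ≤ ‖yhat‖ := by
  have expand : ∀ z : E, ‖y - z‖ ^ 2 = ‖y‖ ^ 2 - 2 * ⟪y, z⟫ + ‖z‖ ^ 2 := fun z => by
    rw [@norm_sub_sq_real]
  have H : ∀ t : ℝ, 0 ≤ t → ‖y - yhat‖ ^ 2 ≤ ‖y - t • yhat‖ ^ 2 := fun t ht =>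
    pow_le_pow_left₀ (norm_nonneg _) (hmin _ (hC _ hyhatC t ht)) 2
  have key : ⟪y, yhat⟫ = ‖yhat‖ ^ 2 := by
    have H' : ∀ t : ℝ, 0 ≤ t →
        ‖y‖ ^ 2 - 2 * ⟪y, yhat⟫ + ‖yhat‖ ^ 2 ≤
        ‖y‖ ^ 2 - 2 * (t * ⟪y, yhat⟫) + t ^ 2 * ‖yhat‖ ^ 2 := by
      intro t ht
      have := H t ht
      rw [expand, expand, real_inner_smul_right, norm_smul] at this
      rw [Real.norm_eq_abs, abs_of_nonneg ht] at this
      nlinarith [this]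
    rcases eq_or_lt_of_le (norm_nonneg yhat) with hb | hb
    · have : yhat = 0 := by rw [← norm_eq_zero, ← hb]
      simp [this]
    · have hb2 : 0 < ‖yhat‖ ^ 2 := by positivity
      have h0 := H' 0 le_rfl
      have ha : 0 ≤ ⟪y, yhat⟫ := by nlinarith
      have ht := H' (⟪y, yhat⟫ / ‖yhat‖ ^ 2) (by positivity)
      have hdb : ⟪y, yhat⟫ / ‖yhat‖ ^ 2 * ‖yhat‖ ^ 2 = ⟪y, yhat⟫ :=
        div_mul_cancel₀ _ hb2.ne'
      nlinarith [mul_le_mul_of_nonneg_right ht hb2.le, hdb, sq_nonneg (⟪y, yhat⟫ - ‖yhat‖ ^ 2),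
        mul_le_mul_of_nonneg_right (mul_le_mul_of_nonneg_right ht hb2.le) hb2.le]
  intro x hx hox
  have h := pow_le_pow_left₀ (norm_nonneg _) (hmin x hx) 2
  rw [expand, expand, key, hox] at h
  nlinarith [norm_nonneg x, norm_nonneg yhat]
end

section
/- Let E be a real inner product space, let C ⊆ E be a cone, and let y ∈ E. If ŷ₁ ∈ C and ŷ₂ ∈ C both satisfy ‖y − ŷᵢ‖ ≤ ‖y − x‖ for all x ∈ C (i = 1, 2), then ‖ŷ₁‖ = ‖ŷ₂‖; i.e., all metric projections of y onto a cone have the same norm. -/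
/-!
If `v` is a nearest point to `y` on a cone, it is in particular a nearest point on the segment
`[0, 2v]`, which is convex, so `y - v` is orthogonal to `v`. By Pythagoras
`‖y - v‖² + ‖v‖² = ‖y‖²`, and since all nearest points are at the same distance from `y`,
they all have the same norm.
-/

open InnerProductSpace

section

variable {E : Type*} [NormedAddCommGroup E] [InnerProductSpace ℝ E]

theorem real_inner_sub_self_eq_zero_of_forall_mem_segment {y v : E}
    (hmin : ∀ w ∈ segment ℝ 0 ((2 : ℝ) • v), ‖y - v‖ ≤ ‖y - w‖) :
    ⟪y - v, v⟫_ℝ = 0 := by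
  set K := segment ℝ (0 : E) ((2 : ℝ) • v)
  have hvK : v ∈ K := by
    refine ⟨1 / 2, 1 / 2, by norm_num, by norm_num, by norm_num, ?_⟩
    rw [smul_zero, zero_add, smul_smul]
    norm_num
  have : Nonempty K := ⟨⟨v, hvK⟩⟩
  have hproj : ‖y - v‖ = ⨅ w : K, ‖y - w‖ :=
    (le_ciInf fun w : K => hmin w w.2).antisymm
      (ciInf_le ⟨0, Set.forall_mem_range.2 fun w : K => norm_nonneg (y - w)⟩ ⟨v, hvK⟩)
  have hvar := (norm_eq_iInf_iff_real_inner_le_zero (convex_segment _ _) hvK).1 hproj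
  have h0 : ⟪y - v, 0 - v⟫_ℝ ≤ 0 := hvar 0 (left_mem_segment ℝ _ _)
  have h2 : ⟪y - v, (2 : ℝ) • v - v⟫_ℝ ≤ 0 := hvar _ (right_mem_segment ℝ _ _)
  rw [zero_sub, inner_neg_right] at h0
  rw [two_smul, add_sub_cancel_right] at h2
  linarith

theorem norm_sub_sq_add_norm_sq_of_forall_norm_sub_le_of_cone {C : Set E}
    (hC : ∀ x ∈ C, ∀ t : ℝ, 0 ≤ t → t • x ∈ C) {y v : E} (hv : v ∈ C)
    (hmin : ∀ x ∈ C, ‖y - v‖ ≤ ‖y - x‖) :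
    ‖y - v‖ ^ 2 + ‖v‖ ^ 2 = ‖y‖ ^ 2 := by
  have hsegment : segment ℝ 0 ((2 : ℝ) • v) ⊆ C := by
    rintro _ ⟨a, b, -, hb, -, rfl⟩
    rw [smul_zero, zero_add, smul_smul]
    exact hC v hv _ (by positivity)
  have horth := real_inner_sub_self_eq_zero_of_forall_mem_segment fun w hw => hmin w (hsegment hw)
  have hpyth := norm_add_sq_eq_norm_sq_add_norm_sq_real horth
  rw [sub_add_cancel] at hpyth
  simpa only [sq] using hpyth.symm

end

theorem metric_projections_onto_cone_same_norm
    {E : Type*} [NormedAddCommGroup E] [InnerProductSpace ℝ E]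
    (C : Set E) (hC : ∀ x ∈ C, ∀ t : ℝ, 0 ≤ t → t • x ∈ C)
    (y : E) (yhat1 yhat2 : E) (hyhat1C : yhat1 ∈ C) (hyhat2C : yhat2 ∈ C)
    (hmin₁ : ∀ x ∈ C, ‖y - yhat1‖ ≤ ‖y - x‖)
    (hmin₂ : ∀ x ∈ C, ‖y - yhat2‖ ≤ ‖y - x‖) :
    ‖yhat1‖ = ‖yhat2‖ := by
  have hdist : ‖y - yhat1‖ = ‖y - yhat2‖ := (hmin₁ _ hyhat2C).antisymm (hmin₂ _ hyhat1C)
  have h₁ := norm_sub_sq_add_norm_sq_of_forall_norm_sub_le_of_cone hC hyhat1C hmin₁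
  have h₂ := norm_sub_sq_add_norm_sq_of_forall_norm_sub_le_of_cone hC hyhat2C hmin₂
  rw [hdist] at h₁
  exact (sq_eq_sq₀ (norm_nonneg _) (norm_nonneg _)).1 (by linarith)
end

section
/- Let A be an n × m real matrix, let s ≤ n, and let μ : Fin n → ℝ be an antitone enumeration of the eigenvalues of the real symmetric matrix A Aᵀ. Then: (i) for every n × s real matrix U with Uᵀ U = I_s, ‖U Uᵀ A‖_F² ≤ ∑_{i < s} μ i; and (ii) there exists an n × s real matrix U with Uᵀ U = I_s and ‖U Uᵀ A‖_F² = ∑_{i < s} μ i. -/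
/-
Diagonalize `A * Aᵀ = Q * diagonal μ * Qᵀ` with `Q` orthogonal. For `Uᵀ * U = 1` the quantity
`‖U Uᵀ A‖_F²` equals `trace (Uᵀ A Aᵀ U) = ∑ i, μ i * c i`, where `c i` is the squared norm of the
`i`-th row of `W = Qᵀ U`. Since `W` has orthonormal columns, `0 ≤ c i ≤ 1` and `∑ i, c i = s`, and
for antitone `μ` such a weighted sum is largest when the weight sits on the first `s` indices.
This maximum is attained by the first `s` columns of `Q`.
-/

open Matrix Polynomial

theorem Polynomial.roots_finset_prod_X_sub_C {R ι : Type*} [CommRing R] [IsDomain R]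
    (s : Finset ι) (f : ι → R) : (∏ i ∈ s, (X - C (f i))).roots = s.val.map f := by
  simpa [Multiset.map_map, Function.comp_def] using roots_multiset_prod_X_sub_C (s.val.map f)

theorem Equiv.Perm.exists_comp_eq_of_map_univ_eq {ι α : Type*} [Fintype ι] {f g : ι → α}
    (h : Finset.univ.val.map f = Finset.univ.val.map g) : ∃ σ : Equiv.Perm ι, f ∘ σ = g := by
  classical
  have hcard : ∀ a, Fintype.card {i // g i = a} = Fintype.card {i // f i = a} := fun a => by
    have := congrArg (Multiset.count a) h.symm
    rw [Multiset.count_map, Multiset.count_map] at this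
    simpa [Fintype.card_subtype, Finset.card, Finset.filter_val, eq_comm] using this
  exact ⟨Equiv.ofFiberEquiv fun a => Fintype.equivOfCardEq (hcard a),
    funext (Equiv.ofFiberEquiv_map _)⟩

theorem Matrix.IsHermitian.exists_orthogonal_conj_diagonal {ι : Type*} [Fintype ι] [DecidableEq ι]
    {S : Matrix ι ι ℝ} (hS : S.IsHermitian) {μ : ι → ℝ}
    (hμ : S.charpoly = ∏ i, (X - C (μ i))) :
    ∃ Q : Matrix ι ι ℝ, Qᵀ * Q = 1 ∧ S = Q * diagonal μ * Qᵀ := by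
  obtain ⟨σ, hσ⟩ : ∃ σ : Equiv.Perm ι, hS.eigenvalues ∘ σ = μ := by
    apply Equiv.Perm.exists_comp_eq_of_map_univ_eq
    have := congrArg roots (hS.charpoly_eq.symm.trans hμ)
    rwa [roots_finset_prod_X_sub_C, roots_finset_prod_X_sub_C] at this
  set V : Matrix ι ι ℝ := (hS.eigenvectorUnitary : Matrix ι ι ℝ)
  have hV : Vᵀ * V = 1 := by
    simpa [star_eq_conjTranspose] using Unitary.coe_star_mul_self hS.eigenvectorUnitary
  have hS' : S = V * diagonal hS.eigenvalues * Vᵀ := by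
    simpa [Unitary.conjStarAlgAut_apply, star_eq_conjTranspose] using hS.spectral_theorem
  refine ⟨V.submatrix id σ, ?_, ?_⟩
  · rw [transpose_submatrix, ← submatrix_mul _ _ _ _ _ Function.bijective_id, hV,
      submatrix_one _ σ.injective]
  · rw [hS', ← hσ, ← submatrix_diagonal_equiv, transpose_submatrix, submatrix_mul_equiv,
      submatrix_mul_equiv, submatrix_id_id]

section

variable {R k m n : Type*} [Fintype k] [Fintype m] [Fintype n]

theorem Matrix.trace_transpose_mul_self_projection [CommSemiring R] [DecidableEq k]
    (U : Matrix n k R) (A : Matrix n m R) (hU : Uᵀ * U = 1) :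
    ((U * Uᵀ * A)ᵀ * (U * Uᵀ * A)).trace = (Uᵀ * (A * Aᵀ) * U).trace := by
  have : (U * Uᵀ * A)ᵀ * (U * Uᵀ * A) = (Aᵀ * U) * (Uᵀ * U) * (Uᵀ * A) := by
    simp only [transpose_mul, transpose_transpose, Matrix.mul_assoc]
  rw [this, hU, Matrix.mul_one, trace_mul_comm]
  simp only [Matrix.mul_assoc]

theorem Matrix.trace_transpose_mul_diagonal_mul_self [CommSemiring R] [DecidableEq n]
    (W : Matrix n k R) (d : n → R) :
    (Wᵀ * diagonal d * W).trace = ∑ i, d i * ∑ j, W i j ^ 2 := by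
  simp only [trace, diag_apply, mul_apply (M := Wᵀ * diagonal d), mul_diagonal, transpose_apply,
    Finset.mul_sum]
  rw [Finset.sum_comm]
  exact Finset.sum_congr rfl fun i _ => Finset.sum_congr rfl fun j _ => by ring

theorem Matrix.sum_sum_sq_eq_card_of_transpose_mul_self_eq_one [CommSemiring R] [DecidableEq k]
    {W : Matrix n k R} (hW : Wᵀ * W = 1) : ∑ i, ∑ j, W i j ^ 2 = Fintype.card k := by
  have := congrArg trace hW
  simp only [trace, diag_apply, mul_apply, transpose_apply] at this
  rw [Finset.sum_comm]
  simpa [sq] using this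

theorem Matrix.sum_sq_le_one_of_transpose_mul_self_eq_one [Field R] [LinearOrder R]
    [IsStrictOrderedRing R] [DecidableEq k] {W : Matrix n k R} (hW : Wᵀ * W = 1) (i : n) :
    ∑ j, W i j ^ 2 ≤ 1 := by
  set P := W * Wᵀ
  have hPP : P * P = P := by
    rw [Matrix.mul_assoc, ← Matrix.mul_assoc Wᵀ, hW, Matrix.one_mul]
  have hPi : P i i = ∑ j, W i j ^ 2 := by simp [P, mul_apply, sq]
  have hP0 : 0 ≤ P i i := hPi ▸ Finset.sum_nonneg fun j _ => sq_nonneg _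
  -- `P` is a symmetric idempotent, so `P i i = ∑ l, P i l ^ 2 ≥ P i i ^ 2`.
  have hsq : P i i ^ 2 ≤ P i i := calc
    P i i ^ 2 ≤ ∑ l, P i l ^ 2 :=
      Finset.single_le_sum (f := fun l => P i l ^ 2) (fun l _ => sq_nonneg _) (Finset.mem_univ i)
    _ = P i i := by
      conv_rhs => rw [← hPP]
      simp only [mul_apply, sq]
      exact Finset.sum_congr rfl fun l _ => by
        congr 1; simp only [P, mul_apply, transpose_apply, mul_comm]
  rw [← hPi]
  nlinarith

end

theorem Finset.sum_mul_le_sum_of_le_threshold {ι : Type*} [Fintype ι] (F : Finset ι) {μ c : ι → ℝ}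
    (t : ℝ) (hF : ∀ i ∈ F, t ≤ μ i) (hFc : ∀ i ∉ F, μ i ≤ t) (hc0 : ∀ i, 0 ≤ c i)
    (hc1 : ∀ i, c i ≤ 1) (hc : ∑ i, c i = F.card) : ∑ i, μ i * c i ≤ ∑ i ∈ F, μ i := by
  classical
  have hin : ∑ i ∈ F, (μ i - t) * c i ≤ ∑ i ∈ F, (μ i - t) :=
    Finset.sum_le_sum fun i hi => mul_le_of_le_one_right (sub_nonneg.mpr (hF i hi)) (hc1 i)
  have hout : ∑ i ∈ Fᶜ, (μ i - t) * c i ≤ 0 :=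
    Finset.sum_nonpos fun i hi =>
      mul_nonpos_of_nonpos_of_nonneg (sub_nonpos.mpr (hFc i (Finset.mem_compl.mp hi))) (hc0 i)
  have hsplit := Finset.sum_add_sum_compl F fun i => (μ i - t) * c i
  simp only [sub_mul, Finset.sum_sub_distrib, ← Finset.mul_sum, hc] at hsplit hin hout
  simp only [Finset.sum_const, nsmul_eq_mul] at hin
  linarith

theorem Antitone.sum_mul_le_sum_filter_lt {n s : ℕ} (hs : s ≤ n) {μ c : Fin n → ℝ}
    (hμ : Antitone μ) (hc0 : ∀ i, 0 ≤ c i) (hc1 : ∀ i, c i ≤ 1) (hc : ∑ i, c i = s) :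
    ∑ i, μ i * c i ≤ ∑ i ∈ Finset.univ.filter (fun i : Fin n => (i : ℕ) < s), μ i := by
  obtain ⟨t, hlt, hge⟩ : ∃ t, (∀ i : Fin n, (i : ℕ) < s → t ≤ μ i) ∧
      ∀ i : Fin n, s ≤ (i : ℕ) → μ i ≤ t := by
    by_cases h : s < n
    · exact ⟨μ ⟨s, h⟩, fun i hi => hμ hi.le, fun i hi => hμ hi⟩
    · obtain ⟨t, ht⟩ := (Set.finite_range μ).bddBelow
      exact ⟨t, fun i _ => ht ⟨i, rfl⟩, fun i hi => absurd i.isLt (by omega)⟩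
  refine Finset.sum_mul_le_sum_of_le_threshold _ t (fun i hi => hlt i (by simpa using hi))
    (fun i hi => hge i (by simpa using hi)) hc0 hc1 ?_
  rw [hc, Fin.card_filter_val_lt, min_eq_right hs]

theorem Matrix.trace_transpose_mul_diagonal_mul_self_le_sum_filter_lt {n s : ℕ} (hs : s ≤ n)
    {μ : Fin n → ℝ} (hμ : Antitone μ) {W : Matrix (Fin n) (Fin s) ℝ} (hW : Wᵀ * W = 1) :
    (Wᵀ * diagonal μ * W).trace ≤ ∑ i ∈ Finset.univ.filter (fun i : Fin n => (i : ℕ) < s), μ i := by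
  rw [trace_transpose_mul_diagonal_mul_self]
  refine hμ.sum_mul_le_sum_filter_lt hs (fun i => Finset.sum_nonneg fun j _ => sq_nonneg _)
    (sum_sq_le_one_of_transpose_mul_self_eq_one hW) ?_
  simpa using sum_sum_sq_eq_card_of_transpose_mul_self_eq_one hW

theorem Fin.sum_castLE_eq_sum_filter_val_lt {M : Type*} [AddCommMonoid M] {s n : ℕ} (hs : s ≤ n)
    (f : Fin n → M) :
    ∑ j : Fin s, f (j.castLE hs) =
      ∑ i ∈ Finset.univ.filter (fun i : Fin n => (i : ℕ) < s), f i := by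
  have : Finset.univ.filter (fun i : Fin n => (i : ℕ) < s) =
      Finset.univ.map (Fin.castLEEmb hs) := by
    ext i
    simpa using ⟨fun hi => ⟨⟨i, hi⟩, rfl⟩, fun ⟨j, hj⟩ => hj ▸ j.isLt⟩
  rw [this, Finset.sum_map]
  rfl

theorem projection_frobenius_sq_eq_sum_top_eigenvalues
    {n m : ℕ} (A : Matrix (Fin n) (Fin m) ℝ) (s : ℕ) (hs : s ≤ n)
    (μ : Fin n → ℝ) (hμ : Antitone μ)
    (hchar : (A * Aᵀ).charpoly = ∏ i : Fin n, (X - C (μ i))) :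
    (∀ U : Matrix (Fin n) (Fin s) ℝ, Uᵀ * U = 1 →
        ((U * Uᵀ * A)ᵀ * (U * Uᵀ * A)).trace ≤
          ∑ i ∈ Finset.univ.filter (fun i : Fin n => (i : ℕ) < s), μ i) ∧
    (∃ U : Matrix (Fin n) (Fin s) ℝ, Uᵀ * U = 1 ∧
        ((U * Uᵀ * A)ᵀ * (U * Uᵀ * A)).trace =
          ∑ i ∈ Finset.univ.filter (fun i : Fin n => (i : ℕ) < s), μ i) := by
  have hS : (A * Aᵀ).IsHermitian := by
    simpa [conjTranspose_eq_transpose_of_trivial] using isHermitian_mul_conjTranspose_self A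
  obtain ⟨Q, hQ, hA⟩ := hS.exists_orthogonal_conj_diagonal hchar
  have hD : Qᵀ * (A * Aᵀ) * Q = diagonal μ := by
    rw [hA, Matrix.mul_assoc, Matrix.mul_assoc, hQ, Matrix.mul_one, ← Matrix.mul_assoc, hQ,
      Matrix.one_mul]
  set U₀ := Q.submatrix id (Fin.castLE hs)
  have hconj₀ : ∀ M : Matrix (Fin n) (Fin n) ℝ,
      U₀ᵀ * M * U₀ = (Qᵀ * M * Q).submatrix (Fin.castLE hs) (Fin.castLE hs) := fun M => rfl
  have hU₀ : U₀ᵀ * U₀ = 1 := by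
    simpa [hQ, submatrix_one _ (Fin.castLE_injective hs)] using hconj₀ 1
  refine ⟨fun U hU => ?_, U₀, hU₀, ?_⟩
  · have hW : (Qᵀ * U)ᵀ * (Qᵀ * U) = 1 := by
      rw [transpose_mul, transpose_transpose, Matrix.mul_assoc, ← Matrix.mul_assoc Q,
        mul_eq_one_comm.mp hQ, Matrix.one_mul, hU]
    have hconj : Uᵀ * (A * Aᵀ) * U = (Qᵀ * U)ᵀ * diagonal μ * (Qᵀ * U) := by
      rw [hA]; simp only [transpose_mul, transpose_transpose, Matrix.mul_assoc]
    rw [trace_transpose_mul_self_projection U A hU, hconj]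
    exact trace_transpose_mul_diagonal_mul_self_le_sum_filter_lt hs hμ hW
  · rw [trace_transpose_mul_self_projection _ A hU₀, hconj₀, hD,
      submatrix_diagonal _ _ (Fin.castLE_injective hs), trace_diagonal]
    exact Fin.sum_castLE_eq_sum_filter_val_lt hs μ
end

section
/- Let A be a nonzero n × m real matrix of rank r, and let s ≤ r. Then there exists an n × s real matrix U with Uᵀ U = I_s such that r * ‖U Uᵀ A‖_F² ≥ s * ‖A‖_F²; i.e., the best rank-s column-space projection captures at least the fraction s/r of the squared Frobenius norm of A. -/
/-!
Take an orthonormal basis `b₁, …, b_r` of the column space of `A`. By Parseval, the energies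
`cᵢ = ∑ⱼ ⟪bᵢ, Aⱼ⟫²` of the columns `Aⱼ` along the `bᵢ` add up to `‖A‖_F²`, so the `s` largest of
them add up to at least `s / r` of it. Their basis vectors are the columns of `U`, and
`‖U Uᵀ A‖_F² = ‖Uᵀ A‖_F²` is exactly the sum of those `s` energies.
-/

open Matrix
open scoped RealInnerProductSpace

namespace Finset

variable {ι α : Type*} [Fintype ι] [DecidableEq ι]
  [AddCommMonoid α] [LinearOrder α] [IsOrderedCancelAddMonoid α]

theorem exists_card_eq_forall_le_of_notMem_of_mem (c : ι → α) {s : ℕ}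
    (hs : s ≤ Fintype.card ι) :
    ∃ T : Finset ι, #T = s ∧ ∀ i ∉ T, ∀ j ∈ T, c i ≤ c j := by
  obtain ⟨T, hT, hmax⟩ := exists_max_image (univ.powersetCard s) (fun T => ∑ i ∈ T, c i)
    (powersetCard_nonempty.2 (by simpa using hs))
  have hTcard : #T = s := (mem_powersetCard.1 hT).2
  refine ⟨T, hTcard, fun i hi j hj => le_of_not_gt fun hji => ?_⟩
  have hi' : i ∉ T.erase j := fun h => hi (mem_of_mem_erase h)
  have hswap : insert i (T.erase j) ∈ univ.powersetCard s := by
    rw [mem_powersetCard, card_insert_of_notMem hi', card_erase_of_mem hj, hTcard]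
    exact ⟨subset_univ _, Nat.sub_add_cancel (hTcard ▸ card_pos.2 ⟨j, hj⟩)⟩
  have := hmax _ hswap
  rw [sum_insert hi', ← add_sum_erase T c hj] at this
  exact (add_lt_add_left hji _).not_ge this

theorem exists_card_eq_nsmul_sum_le (c : ι → α) {s : ℕ} (hs : s ≤ Fintype.card ι) :
    ∃ T : Finset ι, #T = s ∧ s • ∑ i, c i ≤ Fintype.card ι • ∑ i ∈ T, c i := by
  obtain ⟨T, hTcard, hle⟩ := exists_card_eq_forall_le_of_notMem_of_mem c hs
  refine ⟨T, hTcard, ?_⟩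
  have hcompl : s • ∑ i ∈ Tᶜ, c i ≤ (Fintype.card ι - s) • ∑ j ∈ T, c j := by
    calc s • ∑ i ∈ Tᶜ, c i = ∑ i ∈ Tᶜ, ∑ _j ∈ T, c i := by simp [hTcard, smul_sum]
      _ ≤ ∑ _i ∈ Tᶜ, ∑ j ∈ T, c j :=
        sum_le_sum fun i hi => sum_le_sum fun j hj => hle i (mem_compl.1 hi) j hj
      _ = (Fintype.card ι - s) • ∑ j ∈ T, c j := by simp [card_compl, hTcard]
  calc s • ∑ i, c i = s • ∑ i ∈ T, c i + s • ∑ i ∈ Tᶜ, c i := by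
        rw [← sum_add_sum_compl T, nsmul_add]
    _ ≤ s • ∑ i ∈ T, c i + (Fintype.card ι - s) • ∑ j ∈ T, c j := by gcongr
    _ = Fintype.card ι • ∑ i ∈ T, c i := by rw [← add_nsmul, Nat.add_sub_cancel' hs]

end Finset

theorem exists_orthonormal_mul_sum_norm_sq_le {E ι : Type*} [NormedAddCommGroup E]
    [InnerProductSpace ℝ E] [Fintype ι] (K : Submodule ℝ E) [FiniteDimensional ℝ K]
    {v : ι → E} (hv : ∀ j, v j ∈ K) {r s : ℕ} (hK : Module.finrank ℝ K = r) (hs : s ≤ r) :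
    ∃ w : Fin s → E, Orthonormal ℝ w ∧
      (s : ℝ) * ∑ j, ‖v j‖ ^ 2 ≤ r * ∑ l, ∑ j, ⟪w l, v j⟫ ^ 2 := by
  let b : OrthonormalBasis (Fin r) ℝ K := (stdOrthonormalBasis ℝ K).reindex (finCongr hK)
  have hparseval (j : ι) : ∑ i, ⟪(b i : E), v j⟫ ^ 2 = ‖v j‖ ^ 2 := by
    simpa using b.sum_sq_inner_right ⟨v j, hv j⟩
  obtain ⟨T, hT, hle⟩ := Finset.exists_card_eq_nsmul_sum_le
    (fun i => ∑ j, ⟪(b i : E), v j⟫ ^ 2) (hs.trans_eq (Fintype.card_fin r).symm)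
  let e := T.orderEmbOfFin hT
  refine ⟨fun l => b (e l),
    (b.orthonormal.comp e e.injective).comp_linearIsometry K.subtypeₗᵢ, ?_⟩
  have hsum : ∑ i ∈ T, ∑ j, ⟪(b i : E), v j⟫ ^ 2 = ∑ l, ∑ j, ⟪(b (e l) : E), v j⟫ ^ 2 := by
    rw [← T.map_orderEmbOfFin_univ hT, Finset.sum_map]; rfl
  calc (s : ℝ) * ∑ j, ‖v j‖ ^ 2 = s * ∑ i, ∑ j, ⟪(b i : E), v j⟫ ^ 2 := by
        simp only [Finset.sum_comm (γ := Fin r), hparseval]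
    _ ≤ r * ∑ i ∈ T, ∑ j, ⟪(b i : E), v j⟫ ^ 2 := by simpa using hle
    _ = r * ∑ l, ∑ j, ⟪(b (e l) : E), v j⟫ ^ 2 := by rw [hsum]

namespace Matrix

variable {m n k R : Type*}

theorem trace_transpose_mul_self_eq_sum_sq [Fintype m] [Fintype n] [CommSemiring R]
    (M : Matrix m n R) :
    (Mᵀ * M).trace = ∑ i, ∑ j, M i j ^ 2 := by
  simp only [trace, diag, mul_apply, transpose_apply, sq]
  exact Finset.sum_comm

theorem transpose_mul_self_of_transpose_mul_eq_one [Fintype m] [Fintype k] [DecidableEq k]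
    [CommSemiring R] {U : Matrix m k R} (hU : Uᵀ * U = 1) (A : Matrix m n R) :
    (U * Uᵀ * A)ᵀ * (U * Uᵀ * A) = (Uᵀ * A)ᵀ * (Uᵀ * A) := by
  simp only [transpose_mul, transpose_transpose, Matrix.mul_assoc]
  rw [← Matrix.mul_assoc Uᵀ U, hU, Matrix.one_mul]

theorem transpose_of_mul_apply [Fintype m] (w : k → EuclideanSpace ℝ m) (B : Matrix m n ℝ)
    (l : k) (j : n) :
    ((of fun i l => w l i)ᵀ * B) l j = ⟪w l, WithLp.toLp 2 (B.col j)⟫ := by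
  simp [mul_apply, EuclideanSpace.inner_eq_star_dotProduct, dotProduct, mul_comm]

end Matrix

theorem best_rank_s_projection_captures_fraction_general
    {n m : ℕ} (A : Matrix (Fin n) (Fin m) ℝ)
    (r : ℕ) (hr : A.rank = r) (s : ℕ) (hs : s ≤ r) :
    ∃ U : Matrix (Fin n) (Fin s) ℝ, Uᵀ * U = 1 ∧
      (s : ℝ) * (Aᵀ * A).trace ≤ (r : ℝ) * ((U * Uᵀ * A)ᵀ * (U * Uᵀ * A)).trace := by
  let toEuclidean := (WithLp.linearEquiv 2 ℝ (Fin n → ℝ)).symm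
  let K := (Submodule.span ℝ (Set.range A.col)).map toEuclidean.toLinearMap
  have hK : Module.finrank ℝ K = r := by
    rw [LinearEquiv.finrank_map_eq, ← hr, rank_eq_finrank_span_cols]
  obtain ⟨w, hw, hle⟩ := exists_orthonormal_mul_sum_norm_sq_le K
    (fun j => Submodule.mem_map_of_mem (Submodule.subset_span ⟨j, rfl⟩)) hK hs
  let U : Matrix (Fin n) (Fin s) ℝ := of fun i l => w l i
  have hU : Uᵀ * U = 1 := by
    ext l l'
    rw [transpose_of_mul_apply]
    exact congr_fun₂ (gram_eq_one_iff_orthonormal.2 hw) l l'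
  refine ⟨U, hU, ?_⟩
  rw [transpose_mul_self_of_transpose_mul_eq_one hU, trace_transpose_mul_self_eq_sum_sq,
    trace_transpose_mul_self_eq_sum_sq, Finset.sum_comm]
  simpa [U, transpose_of_mul_apply, EuclideanSpace.real_norm_sq_eq, toEuclidean] using hle

theorem best_rank_s_projection_captures_fraction
    {n m : ℕ} (A : Matrix (Fin n) (Fin m) ℝ) (hA : A ≠ 0)
    (r : ℕ) (hr : A.rank = r) (s : ℕ) (hs : s ≤ r) :
    ∃ U : Matrix (Fin n) (Fin s) ℝ, Uᵀ * U = 1 ∧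
      (s : ℝ) * (Aᵀ * A).trace ≤ (r : ℝ) * ((U * Uᵀ * A)ᵀ * (U * Uᵀ * A)).trace :=
  best_rank_s_projection_captures_fraction_general A r hr s hs
end

section
/- Let M and B be m × n real matrices, let s ≤ n, suppose rank B ≤ s and ⟨M, B⟩_F = ‖B‖_F², and let μ : Fin n → ℝ be an antitone enumeration of the eigenvalues of the real symmetric matrix Mᵀ M. Then ‖B‖_F² ≤ ∑_{i < s} μ i; i.e., any matrix of rank at most s satisfying the projection orthogonality condition with respect to M has squared Frobenius norm at most the sum of the s largest eigenvalues of Mᵀ M. -/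
/-!
Let `P` be the orthogonal projection onto the row space of `B`, so that `B = B P` and
`tr P = rank B ≤ s`. Then `‖B‖² = ⟨M, B⟩ = ⟨M P, B⟩ ≤ ‖M P‖ ‖B‖` by Cauchy–Schwarz, hence
`‖B‖² ≤ ‖M P‖² = tr (Mᵀ M P)`. In an orthonormal eigenbasis `(eᵢ)` of `Mᵀ M`, sorted by
decreasing eigenvalue, `tr (Mᵀ M P) = ∑ μᵢ ‖P eᵢ‖²` (Ky Fan): the weights `‖P eᵢ‖²` lie in
`[0, 1]` and add up to `tr P ≤ s`, so this is at most the sum of the `s` largest `μᵢ`.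
-/

open Matrix Polynomial Finset

theorem Antitone.sum_mul_le_sum_filter_val_lt {n s : ℕ} {μ p : Fin n → ℝ} (hμ : Antitone μ)
    (hμ0 : ∀ i, 0 ≤ μ i) (hp : ∀ i, p i ∈ Set.Icc (0 : ℝ) 1) (hps : ∑ i, p i ≤ s) :
    ∑ i, p i * μ i ≤ ∑ i ∈ univ.filter (fun i : Fin n => (i : ℕ) < s), μ i := by
  rcases le_or_gt n s with hns | hsn
  · rw [filter_true_of_mem fun i _ => i.isLt.trans_le hns]
    exact sum_le_sum fun i _ => mul_le_of_le_one_left (hμ0 i) (hp i).2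
  set t := μ ⟨s, hsn⟩
  have hpt : ∀ i, p i * μ i ≤ p i * t + if (i : ℕ) < s then μ i - t else 0 := by
    intro i
    have := (hp i).1
    have := (hp i).2
    split_ifs with hi
    · nlinarith [hμ (show i ≤ ⟨s, hsn⟩ from hi.le)]
    · nlinarith [hμ (show (⟨s, hsn⟩ : Fin n) ≤ i from not_lt.mp hi)]
  calc ∑ i, p i * μ i ≤ ∑ i, (p i * t + if (i : ℕ) < s then μ i - t else 0) :=
        sum_le_sum fun i _ => hpt i
    _ = (∑ i, p i) * t + ∑ i ∈ univ.filter (fun i : Fin n => (i : ℕ) < s), (μ i - t) := by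
        rw [sum_add_distrib, sum_mul, sum_filter]
    _ ≤ s * t + ∑ i ∈ univ.filter (fun i : Fin n => (i : ℕ) < s), (μ i - t) := by
        gcongr
        exact hμ0 _
    _ = ∑ i ∈ univ.filter (fun i : Fin n => (i : ℕ) < s), μ i := by
        rw [sum_sub_distrib, sum_const, Fin.card_filter_val_lt, min_eq_right hsn.le,
          nsmul_eq_mul]
        ring

theorem LinearMap.IsSymmetric.eigenvalues_eq_of_charpoly_eq {𝕜 E : Type*} [RCLike 𝕜]
    [NormedAddCommGroup E] [InnerProductSpace 𝕜 E] [FiniteDimensional 𝕜 E] {T : E →ₗ[𝕜] E}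
    {n : ℕ} (hT : T.IsSymmetric) (hn : Module.finrank 𝕜 E = n) {μ : Fin n → ℝ}
    (hμ : Antitone μ) (hchar : T.charpoly = ∏ i, (X - C (μ i : 𝕜))) :
    hT.eigenvalues hn = μ := by
  apply List.ofFn_injective
  rw [← hT.sort_roots_charpoly_eq_eigenvalues hn, hchar,
    roots_prod _ _ (prod_ne_zero_iff.mpr fun i _ => X_sub_C_ne_zero _)]
  simp_rw [roots_X_sub_C, Multiset.bind_singleton, Multiset.map_map, Function.comp_def,
    RCLike.ofReal_re, Fin.univ_val_map, Multiset.coe_sort]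
  apply List.mergeSort_of_pairwise
  simp_rw [decide_eq_true_eq, ← List.sortedGE_iff_pairwise]
  exact hμ.sortedGE_ofFn

theorem Submodule.trace_starProjection {𝕜 E : Type*} [RCLike 𝕜] [NormedAddCommGroup E]
    [InnerProductSpace 𝕜 E] [FiniteDimensional 𝕜 E] (K : Submodule 𝕜 E) :
    LinearMap.trace 𝕜 E K.starProjection = Module.finrank 𝕜 K := by
  rw [(stdOrthonormalBasis 𝕜 K).starProjection_eq_sum_rankOne,
    ContinuousLinearMap.toLinearMap_sum, map_sum]
  simp only [InnerProductSpace.trace_rankOne, ← Submodule.coe_inner,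
    OrthonormalBasis.inner_eq_one]
  simp

open scoped InnerProductSpace in
theorem LinearMap.IsPositive.trace_comp_starProjection_le {E : Type*} [NormedAddCommGroup E]
    [InnerProductSpace ℝ E] [FiniteDimensional ℝ E] {T : E →ₗ[ℝ] E} (hT : T.IsPositive)
    {n s : ℕ} (hn : Module.finrank ℝ E = n) (K : Submodule ℝ E) (hK : Module.finrank ℝ K ≤ s) :
    LinearMap.trace ℝ E (T ∘ₗ K.starProjection) ≤
      ∑ i ∈ univ.filter (fun i : Fin n => (i : ℕ) < s), hT.isSymmetric.eigenvalues hn i := by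
  let b := hT.isSymmetric.eigenvectorBasis hn
  let p : Fin n → ℝ := fun i => ⟪b i, K.starProjection (b i)⟫_ℝ
  have htrace : LinearMap.trace ℝ E (T ∘ₗ K.starProjection) =
      ∑ i, p i * hT.isSymmetric.eigenvalues hn i := by
    rw [LinearMap.trace_eq_sum_inner _ b]
    refine sum_congr rfl fun i _ => ?_
    rw [LinearMap.comp_apply, ← hT.isSymmetric, hT.isSymmetric.apply_eigenvectorBasis,
      real_inner_smul_left, mul_comm]
    rfl
  have hp : ∀ i, p i ∈ Set.Icc (0 : ℝ) 1 := fun i => by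
    refine ⟨by simpa [real_inner_comm] using K.re_inner_starProjection_nonneg (b i), ?_⟩
    calc p i ≤ ‖b i‖ * ‖K.starProjection (b i)‖ := real_inner_le_norm _ _
      _ ≤ 1 * 1 := by
        gcongr
        · exact (b.norm_eq_one i).le
        · exact (K.norm_starProjection_apply_le _).trans (b.norm_eq_one i).le
      _ = 1 := one_mul 1
  have hps : ∑ i, p i = Module.finrank ℝ K := by
    rw [← K.trace_starProjection, LinearMap.trace_eq_sum_inner _ b]
    rfl
  rw [htrace]
  exact (hT.isSymmetric.eigenvalues_antitone hn).sum_mul_le_sum_filter_val_lt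
    (hT.nonneg_eigenvalues hn) hp (by rw [hps]; exact_mod_cast hK)

namespace Submodule

variable {ι : Type*} [Fintype ι] [DecidableEq ι]

noncomputable def starProjectionMatrix (K : Submodule ℝ (EuclideanSpace ℝ ι)) : Matrix ι ι ℝ :=
  (toEuclideanCLM (𝕜 := ℝ) (n := ι)).symm K.starProjection

variable (K : Submodule ℝ (EuclideanSpace ℝ ι))

theorem toEuclideanLin_starProjectionMatrix :
    toEuclideanLin K.starProjectionMatrix = K.starProjection := by
  rw [starProjectionMatrix, ← coe_toEuclideanCLM_eq_toEuclideanLin, StarAlgEquiv.apply_symm_apply]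

theorem isSymm_starProjectionMatrix : K.starProjectionMatrix.IsSymm :=
  isHermitian_iff_isSymm.mp <| isSymmetric_toEuclideanLin_iff.mp <|
    K.toEuclideanLin_starProjectionMatrix ▸ K.starProjection_isSymmetric

theorem isIdempotentElem_starProjectionMatrix : IsIdempotentElem K.starProjectionMatrix :=
  K.isIdempotentElem_starProjection.map _

end Submodule

namespace Matrix

variable {m ι : Type*} [Fintype ι]

section Frobenius

variable {R : Type*} [Fintype m]

theorem trace_transpose_mul_eq_sum [NonUnitalNonAssocSemiring R] (X Y : Matrix m ι R) :
    (Xᵀ * Y).trace = ∑ i, ∑ j, X i j * Y i j := by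
  simp only [trace, diag, mul_apply, transpose_apply]
  exact sum_comm

variable [CommRing R] [LinearOrder R] [IsStrictOrderedRing R]

theorem trace_transpose_mul_self_nonneg (X : Matrix m ι R) : 0 ≤ (Xᵀ * X).trace := by
  rw [trace_transpose_mul_eq_sum]
  exact sum_nonneg fun i _ => sum_nonneg fun j _ => mul_self_nonneg _

theorem trace_transpose_mul_sq_le (X Y : Matrix m ι R) :
    (Xᵀ * Y).trace ^ 2 ≤ (Xᵀ * X).trace * (Yᵀ * Y).trace := by
  simp only [trace_transpose_mul_eq_sum, ← Fintype.sum_prod_type']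
  simpa only [sq] using
    sum_mul_sq_le_sq_mul_sq univ (fun p : m × ι => X p.1 p.2) fun p => Y p.1 p.2

theorem trace_transpose_mul_self_le_of_mul_eq (M B : Matrix m ι R) {P : Matrix ι ι R}
    (hP : P.IsSymm) (hPP : IsIdempotentElem P) (hBP : B * P = B)
    (horth : (Mᵀ * B).trace = (Bᵀ * B).trace) :
    (Bᵀ * B).trace ≤ (Mᵀ * M * P).trace := by
  have hcross : ((M * P)ᵀ * B).trace = (Bᵀ * B).trace := by
    rw [transpose_mul, hP.eq, Matrix.mul_assoc, trace_mul_comm, Matrix.mul_assoc, hBP, horth]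
  have hnorm : ((M * P)ᵀ * (M * P)).trace = (Mᵀ * M * P).trace := by
    rw [transpose_mul, hP.eq, Matrix.mul_assoc, trace_mul_comm, ← Matrix.mul_assoc,
      Matrix.mul_assoc _ P P, hPP.eq, Matrix.mul_assoc]
  have hCS := trace_transpose_mul_sq_le (M * P) B
  rw [hcross, hnorm] at hCS
  nlinarith [trace_transpose_mul_self_nonneg B, trace_transpose_mul_self_nonneg (M * P), hnorm]

end Frobenius

variable [DecidableEq ι]

theorem trace_eq_trace_toEuclideanLin (A : Matrix ι ι ℝ) :
    A.trace = LinearMap.trace ℝ _ (toEuclideanLin A) := by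
  rw [toEuclideanLin_eq_toLin_orthonormal, trace_toLin_eq]

theorem finrank_orthogonal_ker_toEuclideanLin [Fintype m] (B : Matrix m ι ℝ) :
    Module.finrank ℝ (LinearMap.ker (toEuclideanLin B))ᗮ = B.rank := by
  have h1 := (LinearMap.ker (toEuclideanLin B)).finrank_add_finrank_orthogonal
  have h2 := LinearMap.finrank_range_add_finrank_ker (toEuclideanLin B)
  rw [B.rank_eq_finrank_range_toLin (EuclideanSpace.basisFun m ℝ).toBasis
    (EuclideanSpace.basisFun ι ℝ).toBasis, ← toEuclideanLin_eq_toLin_orthonormal]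
  omega

theorem mul_starProjectionMatrix_orthogonal_ker (B : Matrix m ι ℝ) :
    B * (LinearMap.ker (toEuclideanLin B))ᗮ.starProjectionMatrix = B := by
  apply toEuclideanLin.injective
  rw [toLpLin_mul_same, Submodule.toEuclideanLin_starProjectionMatrix]
  ext1 x
  have := (LinearMap.ker (toEuclideanLin B))ᗮ.sub_starProjection_mem_orthogonal x
  rw [Submodule.orthogonal_orthogonal, LinearMap.mem_ker, map_sub, sub_eq_zero] at this
  exact this.symm

end Matrix

theorem low_rank_orthogonality_norm_bound_general
    {m n : ℕ} (M B : Matrix (Fin m) (Fin n) ℝ) (s : ℕ)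
    (hrank : B.rank ≤ s)
    (horth : (Mᵀ * B).trace = (Bᵀ * B).trace)
    (μ : Fin n → ℝ) (hμ : Antitone μ)
    (hchar : (Mᵀ * M).charpoly = ∏ i : Fin n, (X - C (μ i))) :
    (Bᵀ * B).trace ≤ ∑ i ∈ Finset.univ.filter (fun i : Fin n => (i : ℕ) < s), μ i := by
  have hT : (toEuclideanLin (Mᵀ * M)).IsPositive := by
    rw [isPositive_toEuclideanLin_iff, ← conjTranspose_eq_transpose_of_trivial]
    exact posSemidef_conjTranspose_mul_self M
  have heig : hT.isSymmetric.eigenvalues finrank_euclideanSpace_fin = μ :=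
    hT.isSymmetric.eigenvalues_eq_of_charpoly_eq _ hμ (by
      rw [toEuclideanLin_eq_toLin_orthonormal, charpoly_toLin, hchar]
      rfl)
  set K := (LinearMap.ker (toEuclideanLin B))ᗮ
  calc (Bᵀ * B).trace ≤ (Mᵀ * M * K.starProjectionMatrix).trace :=
        trace_transpose_mul_self_le_of_mul_eq M B K.isSymm_starProjectionMatrix
          K.isIdempotentElem_starProjectionMatrix B.mul_starProjectionMatrix_orthogonal_ker horth
    _ = LinearMap.trace ℝ _ (toEuclideanLin (Mᵀ * M) ∘ₗ K.starProjection) := by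
        rw [trace_eq_trace_toEuclideanLin, toLpLin_mul_same,
          K.toEuclideanLin_starProjectionMatrix]
    _ ≤ _ := heig ▸ hT.trace_comp_starProjection_le _ K
        ((finrank_orthogonal_ker_toEuclideanLin B).trans_le hrank)

theorem low_rank_orthogonality_norm_bound
    {m n : ℕ} (M B : Matrix (Fin m) (Fin n) ℝ) (s : ℕ) (hs : s ≤ n)
    (hrank : B.rank ≤ s)
    (horth : (Mᵀ * B).trace = (Bᵀ * B).trace)
    (μ : Fin n → ℝ) (hμ : Antitone μ)
    (hchar : (Mᵀ * M).charpoly = ∏ i : Fin n, (X - C (μ i))) :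
    (Bᵀ * B).trace ≤ ∑ i ∈ Finset.univ.filter (fun i : Fin n => (i : ℕ) < s), μ i :=
  low_rank_orthogonality_norm_bound_general M B s hrank horth μ hμ hchar
end

section
/- Let A and X be m × n real matrices, let U be an m × r real matrix with Uᵀ U = I_r and U Uᵀ X = X, and let V be an n × r real matrix with Vᵀ V = I_r and X V Vᵀ = X. If the tangent-space projection of X − A vanishes, i.e., U Uᵀ (X − A) + (X − A) V Vᵀ − U Uᵀ (X − A) V Vᵀ = 0, then X = U Uᵀ A V Vᵀ; moreover U Uᵀ A = X, A V Vᵀ = X, and A − X = (I_m − U Uᵀ) A (I_n − V Vᵀ). -/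
open Matrix

theorem tangent_space_projection_vanishes
    {m n r : ℕ} (A X : Matrix (Fin m) (Fin n) ℝ)
    (U : Matrix (Fin m) (Fin r) ℝ) (hU : Uᵀ * U = 1) (hUX : U * Uᵀ * X = X)
    (V : Matrix (Fin n) (Fin r) ℝ) (hV : Vᵀ * V = 1) (hXV : X * (V * Vᵀ) = X)
    (hproj : U * Uᵀ * (X - A) + (X - A) * (V * Vᵀ) - U * Uᵀ * (X - A) * (V * Vᵀ) = 0) :
    X = U * Uᵀ * A * (V * Vᵀ) ∧ U * Uᵀ * A = X ∧ A * (V * Vᵀ) = X ∧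
      A - X = (1 - U * Uᵀ) * A * (1 - V * Vᵀ) := by
  have hP : U * Uᵀ * (U * Uᵀ) = U * Uᵀ := by
    rw [Matrix.mul_assoc U Uᵀ, ← Matrix.mul_assoc Uᵀ, hU, Matrix.one_mul]
  have hQ : V * Vᵀ * (V * Vᵀ) = V * Vᵀ := by
    rw [Matrix.mul_assoc V Vᵀ, ← Matrix.mul_assoc Vᵀ, hV, Matrix.one_mul]
  have hPA : U * Uᵀ * A = X := by
    have h1 : U * Uᵀ * X - U * Uᵀ * A = 0 := by
      have := congrArg (fun Z => U * Uᵀ * Z) hproj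
      simp only [Matrix.mul_add, Matrix.mul_sub, Matrix.mul_zero,
        ← Matrix.mul_assoc, hP] at this
      simpa using this
    rw [hUX] at h1
    exact (sub_eq_zero.mp h1).symm
  have hAQ : A * (V * Vᵀ) = X := by
    have h2 : X * V * Vᵀ - A * V * Vᵀ = 0 := by
      have := congrArg (fun Z => Z * (V * Vᵀ)) hproj
      simp only [Matrix.add_mul, Matrix.sub_mul, Matrix.zero_mul,
        Matrix.mul_assoc, hQ] at this
      simpa [← Matrix.mul_assoc] using this
    rw [Matrix.mul_assoc, hXV] at h2
    rw [← Matrix.mul_assoc]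
    exact (sub_eq_zero.mp h2).symm
  have hPAQ : U * Uᵀ * A * (V * Vᵀ) = X := by rw [hPA, hXV]
  refine ⟨hPAQ.symm, hPA, hAQ, ?_⟩
  have : (1 - U * Uᵀ) * A * (1 - V * Vᵀ) =
      A - U * Uᵀ * A - A * (V * Vᵀ) + U * Uᵀ * A * (V * Vᵀ) := by
    simp only [Matrix.sub_mul, Matrix.mul_sub, Matrix.one_mul, Matrix.mul_one]
    abel
  rw [this, hPAQ, hPA, hAQ]
  abel
end

section
/- Let A and B be m × n real matrices with Aᵀ B = 0 and A Bᵀ = 0 (orthogonal column spaces and orthogonal row spaces). Then rank (A + B) = rank A + rank B. -/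
open Matrix

theorem rank_add_of_orthogonal_row_and_column_spaces
    {m n : ℕ} (A B : Matrix (Fin m) (Fin n) ℝ)
    (hcol : Aᵀ * B = 0) (hrow : A * Bᵀ = 0) :
    (A + B).rank = A.rank + B.rank := by
  have key : ∀ (C D : Matrix (Fin m) (Fin n) ℝ), C * Dᵀ = 0 →
      LinearMap.range C.mulVecLin ≤ LinearMap.range (C + D).mulVecLin := by
    intro C D h
    have h1 : (C + D) * Cᵀ = C * Cᵀ := by
      have hDC : D * Cᵀ = 0 := by
        have := congrArg transpose h
        simpa [transpose_mul] using this
      rw [Matrix.add_mul, hDC, add_zero]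
    have hle : LinearMap.range (C * Cᵀ).mulVecLin ≤ LinearMap.range C.mulVecLin := by
      rw [mulVecLin_mul]
      exact LinearMap.range_comp_le_range _ _
    have heq : LinearMap.range (C * Cᵀ).mulVecLin = LinearMap.range C.mulVecLin := by
      apply Submodule.eq_of_le_of_finrank_le hle
      exact le_of_eq (C.rank_self_mul_transpose).symm
    calc LinearMap.range C.mulVecLin = LinearMap.range ((C + D) * Cᵀ).mulVecLin := by
          rw [h1, heq]
      _ ≤ LinearMap.range (C + D).mulVecLin := by
          rw [mulVecLin_mul]; exact LinearMap.range_comp_le_range _ _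
  have hBA : B * Aᵀ = 0 := by
    have := congrArg transpose hrow
    simpa [transpose_mul] using this
  have hA := key A B hrow
  have hB := key B A hBA
  rw [add_comm B A] at hB
  have hsub : LinearMap.range (A + B).mulVecLin ≤
      LinearMap.range A.mulVecLin ⊔ LinearMap.range B.mulVecLin := by
    rintro x ⟨y, rfl⟩
    rw [mulVecLin_add]
    exact Submodule.add_mem_sup (LinearMap.mem_range_self _ y) (LinearMap.mem_range_self _ y)
  have hrange : LinearMap.range (A + B).mulVecLin =
      LinearMap.range A.mulVecLin ⊔ LinearMap.range B.mulVecLin :=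
    le_antisymm hsub (sup_le hA hB)
  have hinf : LinearMap.range A.mulVecLin ⊓ LinearMap.range B.mulVecLin = ⊥ := by
    rw [Submodule.eq_bot_iff]
    rintro x ⟨⟨u, hu⟩, ⟨v, hv⟩⟩
    have hdot : x ⬝ᵥ x = 0 := by
      nth_rewrite 2 [← hv]
      rw [← hu]
      simp only [mulVecLin_apply]
      rw [dotProduct_mulVec, ← vecMul_transpose, vecMul_vecMul, hcol]
      simp
    exact dotProduct_self_eq_zero.mp hdot
  have hdim := Submodule.finrank_sup_add_finrank_inf_eq
    (LinearMap.range A.mulVecLin) (LinearMap.range B.mulVecLin)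
  rw [hinf, finrank_bot, add_zero] at hdim
  simp only [Matrix.rank]
  rw [hrange]
  exact hdim
end

section
/- Let X be an m × n real matrix with rank X = r, let k be a natural number with r ≤ k, let U be an m × r real matrix with Uᵀ U = I_r and U Uᵀ X = X, and let V be an n × r real matrix with Vᵀ V = I_r and X V Vᵀ = X. Then, in the space of m × n real matrices equipped with the Frobenius norm, the tangent cone (in the sense of Mathlib's tangentConeAt, i.e., the Bouligand contingent cone) at X to the set {Y : rank Y ≤ k} of matrices of rank at most k equals the set of all m × n real matrices G with rank ((I_m − U Uᵀ) G (I_n − V Vᵀ)) ≤ k − r. -/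
/-!
Write `P = 1 - U Uᵀ`, `Q = 1 - V Vᵀ` and `S = Uᵀ X V`, so that `X = U S Vᵀ` with `S` invertible.

If `rank (P G Q) ≤ k - r`, then with `K = P G V S⁻¹` we have
`X + t • (G + t • K Uᵀ G) = (U + t • K) (S Vᵀ + t • Uᵀ G) + t • P G Q`,
a matrix of rank at most `r + (k - r)`, so `G` is tangent to `{rank ≤ k}` at `X`.

Conversely, for `Y = X + D` close to `X` the block `Uᵀ Y V` stays invertible and the Schur
complement `W = Y - Y V (Uᵀ Y V)⁻¹ Uᵀ Y` has rank at most `rank Y - r`. Since `P X = 0 = X Q`,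
`W = P D Q - P D V (Uᵀ Y V)⁻¹ Uᵀ D Q`, so along a tangent sequence `c • D → G, D → 0` the
matrices `c • W`, all of rank at most `k - r`, converge to `P G Q`; the set of matrices of rank
at most `k - r` is closed.
-/

open Filter Topology Module

namespace Matrix

section Rank

variable {K m n : Type*} [Field K]

theorem rank_add_le [Fintype n] (A B : Matrix m n K) : (A + B).rank ≤ A.rank + B.rank := by
  rw [rank, rank, rank, mulVecLin_add]
  exact (Submodule.finrank_mono (LinearMap.range_add_le _ _)).trans
    (Submodule.finrank_add_le_finrank_add_finrank _ _)

theorem rank_smul_le [Fintype n] (c : K) (A : Matrix m n K) : (c • A).rank ≤ A.rank := by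
  rcases eq_or_ne c 0 with rfl | hc
  · simp
  · rw [rank_smul_of_mem_nonZeroDivisors A (mem_nonZeroDivisors_of_ne_zero hc)]

theorem isUnit_of_rank_eq_card [Fintype n] [DecidableEq n] {A : Matrix n n K}
    (h : A.rank = Fintype.card n) : IsUnit A := by
  rw [← mulVec_surjective_iff_isUnit]
  refine LinearMap.range_eq_top.mp
    (Submodule.eq_top_of_finrank_eq (S := LinearMap.range A.mulVecLin) ?_)
  rw [← rank, h, finrank_fintype_fun_eq_card]

theorem isClosed_setOf_rank_le [Fintype m] [Fintype n] (s : ℕ) :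
    IsClosed {A : Matrix m n ℝ | A.rank ≤ s} := by
  refine isOpen_compl_iff.mp (isOpen_iff_mem_nhds.mpr fun A hA => ?_)
  replace hA : s < A.rank := not_le.mp hA
  -- A basis of the column space of `A` made of columns `c i`: the Gram matrix of these columns
  -- is invertible at `A`, hence near `A`, and bounds the rank from below.
  obtain ⟨f, hf_col, -, hf_li⟩ := Submodule.exists_fun_fin_finrank_span_eq ℝ (Set.range A.col)
  choose c hc using hf_col
  rw [rank_eq_finrank_span_cols] at hA
  let gram := fun B : Matrix m n ℝ => (B.submatrix id c)ᵀ * B.submatrix id c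
  have hrank (B) (hB : (gram B).det ≠ 0) :
      finrank ℝ (Submodule.span ℝ (Set.range A.col)) ≤ B.rank :=
    calc _ = (gram B).rank := by rw [rank_of_det_ne_zero hB, Fintype.card_fin]
      _ ≤ (B.submatrix id c).rank := rank_mul_le_right _ _
      _ ≤ B.rank := rank_submatrix_le _ _ _
  have hgram_A : (gram A).det ≠ 0 := by
    refine ((isUnit_iff_isUnit_det _).mp (isUnit_of_rank_eq_card ?_)).ne_zero
    have hrow : (A.submatrix id c)ᵀ.row = f := by
      ext i j
      simp [← hc]
    rw [rank_transpose_mul_self, ← rank_transpose, LinearIndependent.rank_matrix (hrow ▸ hf_li),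
      Fintype.card_fin]
  have hgram : Continuous gram := by fun_prop
  filter_upwards [hgram.matrix_det.continuousAt.eventually_ne hgram_A] with B hB
  exact not_le.mpr (hA.trans_le (hrank B hB))

end Rank

section SchurComplement

variable {K m n r : Type*} [Fintype m] [Fintype n] [Fintype r] [DecidableEq r]

noncomputable def schurComplement [CommRing K] (L : Matrix r m K) (Y : Matrix m n K)
    (R : Matrix n r K) : Matrix m n K :=
  Y - Y * R * (L * Y * R)⁻¹ * (L * Y)

section CommRing

variable [CommRing K] {L : Matrix r m K} {Y : Matrix m n K} {R : Matrix n r K}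

theorem mul_schurComplement (h : IsUnit (L * Y * R)) : L * schurComplement L Y R = 0 := by
  have : L * (Y * R * (L * Y * R)⁻¹ * (L * Y)) = L * Y * R * (L * Y * R)⁻¹ * (L * Y) := by
    simp only [Matrix.mul_assoc]
  rw [schurComplement, Matrix.mul_sub, this, mul_nonsing_inv _ ((isUnit_iff_isUnit_det _).mp h),
    Matrix.one_mul, sub_self]

theorem schurComplement_mul (h : IsUnit (L * Y * R)) : schurComplement L Y R * R = 0 := by
  have : Y * R * (L * Y * R)⁻¹ * (L * Y) * R = Y * R * ((L * Y * R)⁻¹ * (L * Y * R)) := by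
    simp only [Matrix.mul_assoc]
  rw [schurComplement, Matrix.sub_mul, this, nonsing_inv_mul _ ((isUnit_iff_isUnit_det _).mp h),
    Matrix.mul_one, sub_self]

theorem schurComplement_add_eq [DecidableEq m] [DecidableEq n] {X D : Matrix m n K}
    {U : Matrix m r K} {V : Matrix n r K} (hUX : U * Uᵀ * X = X) (hXV : X * (V * Vᵀ) = X)
    (h : IsUnit (Uᵀ * (X + D) * V)) :
    schurComplement Uᵀ (X + D) V = (1 - U * Uᵀ) * D * (1 - V * Vᵀ) -
      (1 - U * Uᵀ) * D * V * (Uᵀ * (X + D) * V)⁻¹ * (Uᵀ * D * (1 - V * Vᵀ)) := by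
  set W := schurComplement Uᵀ (X + D) V
  have hPW : (1 - U * Uᵀ) * W = W := by
    rw [Matrix.sub_mul, Matrix.mul_assoc, mul_schurComplement h, Matrix.mul_zero, Matrix.one_mul,
      sub_zero]
  have hWQ : W * (1 - V * Vᵀ) = W := by
    rw [Matrix.mul_sub, ← Matrix.mul_assoc, schurComplement_mul h, Matrix.zero_mul,
      Matrix.mul_one, sub_zero]
  have hPX : (1 - U * Uᵀ) * X = 0 := by rw [Matrix.sub_mul, Matrix.one_mul, hUX, sub_self]
  have hXQ : X * (1 - V * Vᵀ) = 0 := by rw [Matrix.mul_sub, Matrix.mul_one, hXV, sub_self]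
  set P := 1 - U * Uᵀ
  set Q := 1 - V * Vᵀ
  calc W = P * W * Q := by rw [hPW, hWQ]
    _ = P * (X + D) * Q - P * (X + D) * V * (Uᵀ * (X + D) * V)⁻¹ * (Uᵀ * ((X + D) * Q)) := by
      simp only [W, schurComplement, Matrix.mul_sub, Matrix.sub_mul, Matrix.mul_assoc]
    _ = _ := by
      rw [Matrix.mul_add, Matrix.add_mul X, hPX, hXQ, zero_add, zero_add, Matrix.mul_assoc Uᵀ D]

end CommRing

theorem card_add_rank_schurComplement_le [Field K] {L : Matrix r m K} {Y : Matrix m n K}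
    {R : Matrix n r K} (h : IsUnit (L * Y * R)) :
    Fintype.card r + (schurComplement L Y R).rank ≤ Y.rank := by
  set W := schurComplement L Y R
  have hL_inj := mulVec_injective_iff_isUnit.mpr h
  have hYR : Function.Injective (Y * R).mulVecLin := fun x y hxy => by
    apply hL_inj
    simpa only [mulVecLin_apply, ← mulVec_mulVec, Matrix.mul_assoc] using congrArg (L *ᵥ ·) hxy
  have hdisj : Disjoint (LinearMap.range (Y * R).mulVecLin) (LinearMap.range W.mulVecLin) := by
    rw [Submodule.disjoint_def]
    rintro _ ⟨x, rfl⟩ ⟨z, hz⟩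
    have hLW : L * W = 0 := mul_schurComplement h
    have : (L * Y * R) *ᵥ x = 0 := by
      simpa [mulVec_mulVec, Matrix.mul_assoc, hLW] using congrArg (L *ᵥ ·) hz.symm
    simp [hL_inj.eq_iff' (mulVec_zero _) |>.mp this]
  have hsup : LinearMap.range (Y * R).mulVecLin ⊔ LinearMap.range W.mulVecLin ≤
      LinearMap.range Y.mulVecLin := by
    refine sup_le ?_ ?_ <;> rintro _ ⟨x, rfl⟩
    · exact ⟨R *ᵥ x, by simp [mulVec_mulVec]⟩
    · exact ⟨x - (R * (L * Y * R)⁻¹ * (L * Y)) *ᵥ x, by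
        simp [W, schurComplement, mulVec_sub, mulVec_mulVec, Matrix.mul_assoc]⟩
  calc Fintype.card r + W.rank
      = finrank K ↥(LinearMap.range (Y * R).mulVecLin ⊔ LinearMap.range W.mulVecLin) := by
        rw [← add_zero (finrank K _), ← finrank_bot K (m → K), ← hdisj.eq_bot,
          Submodule.finrank_sup_add_finrank_inf_eq, LinearMap.finrank_range_of_inj hYR,
          finrank_fintype_fun_eq_card, rank]
    _ ≤ Y.rank := Submodule.finrank_mono hsup

end SchurComplement

end Matrix

theorem mem_tangentConeAt_of_add_smul_add_smul_mem {𝕜 E : Type*} [NontriviallyNormedField 𝕜]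
    [AddCommGroup E] [Module 𝕜 E] [TopologicalSpace E] [IsTopologicalAddGroup E]
    [ContinuousSMul 𝕜 E] {s : Set E} {x y e : E}
    (h : ∀ᶠ t in 𝓝[≠] (0 : 𝕜), x + t • (y + t • e) ∈ s) : y ∈ tangentConeAt 𝕜 s x := by
  have hd : Tendsto (fun t : 𝕜 => t • (y + t • e)) (𝓝[≠] 0) (𝓝 0) := by
    have := ((show Continuous fun t : 𝕜 => t • (y + t • e) by fun_prop).tendsto 0).mono_left
      (nhdsWithin_le_nhds (s := {0}ᶜ))
    rwa [zero_smul] at this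
  have hcd : Tendsto (fun t : 𝕜 => y + t • e) (𝓝[≠] 0) (𝓝 y) := by
    have := ((show Continuous fun t : 𝕜 => y + t • e by fun_prop).tendsto 0).mono_left
      (nhdsWithin_le_nhds (s := {0}ᶜ))
    rwa [zero_smul, add_zero] at this
  refine mem_tangentConeAt_of_seq (𝓝[≠] 0) (·⁻¹) (fun t => t • (y + t • e)) hd h
    (hcd.congr' (eventually_nhdsWithin_of_forall fun t (ht : t ≠ 0) => ?_))
  exact (inv_smul_smul₀ ht _).symm

open Matrix

section TangentCone

variable {m n r : Type*} [Fintype m] [Fintype n] [Fintype r] [DecidableEq m] [DecidableEq n]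
  [DecidableEq r]

theorem subset_tangentConeAt_setOf_rank_le {𝕜 : Type*} [NontriviallyNormedField 𝕜]
    {X : Matrix m n 𝕜} {U : Matrix m r 𝕜} {S : Matrix r r 𝕜} {V : Matrix n r 𝕜}
    (hX : X = U * S * Vᵀ) (hS : IsUnit S) {k : ℕ} (hrk : Fintype.card r ≤ k) :
    {G | ((1 - U * Uᵀ) * G * (1 - V * Vᵀ)).rank ≤ k - Fintype.card r} ⊆
      tangentConeAt 𝕜 {Y | Y.rank ≤ k} X := by
  intro G hG
  replace hG : _ ≤ k - Fintype.card r := hG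
  set P := 1 - U * Uᵀ
  set Q := 1 - V * Vᵀ
  set K := P * G * V * S⁻¹
  have hKS : K * S = P * G * V := by
    rw [Matrix.mul_assoc, nonsing_inv_mul _ ((isUnit_iff_isUnit_det _).mp hS), Matrix.mul_one]
  have hG_split : G = U * Uᵀ * G + P * G * V * Vᵀ + P * G * Q := by
    simp only [P, Q, Matrix.sub_mul, Matrix.mul_sub, Matrix.one_mul, Matrix.mul_one,
      Matrix.mul_assoc]
    abel
  refine mem_tangentConeAt_of_add_smul_add_smul_mem (e := K * (Uᵀ * G))
    (Eventually.of_forall fun t => ?_)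
  have hfactor : X + t • (G + t • (K * (Uᵀ * G))) =
      (U + t • K) * (S * Vᵀ + t • (Uᵀ * G)) + t • (P * G * Q) := by
    rw [hX]
    simp only [Matrix.add_mul, Matrix.mul_add, Matrix.smul_mul, Matrix.mul_smul,
      ← Matrix.mul_assoc, hKS]
    linear_combination (norm := module) t • hG_split
  show _ ≤ k
  rw [hfactor]
  calc _ ≤ ((U + t • K) * (S * Vᵀ + t • (Uᵀ * G))).rank + (t • (P * G * Q)).rank :=
        rank_add_le _ _
    _ ≤ Fintype.card r + (k - Fintype.card r) :=
        add_le_add ((rank_mul_le_right _ _).trans (rank_le_card_height _))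
          ((rank_smul_le _ _).trans hG)
    _ = k := by omega

theorem tangentConeAt_setOf_rank_le_subset {X : Matrix m n ℝ} {U : Matrix m r ℝ}
    {V : Matrix n r ℝ} (hUX : U * Uᵀ * X = X) (hXV : X * (V * Vᵀ) = X)
    (hS : IsUnit (Uᵀ * X * V)) (k : ℕ) :
    tangentConeAt ℝ {Y : Matrix m n ℝ | Y.rank ≤ k} X ⊆
      {G | ((1 - U * Uᵀ) * G * (1 - V * Vᵀ)).rank ≤ k - Fintype.card r} := by
  intro G hG
  obtain ⟨α, l, hl, c, d, hd, hds, hcd⟩ := exists_fun_of_mem_tangentConeAt hG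
  have hA : Tendsto (fun a => Uᵀ * (X + d a) * V) l (𝓝 (Uᵀ * X * V)) := by
    have := ((show Continuous fun D : Matrix m n ℝ => Uᵀ * (X + D) * V by fun_prop).tendsto 0).comp
      hd
    rwa [add_zero] at this
  have hS_det : (Uᵀ * X * V).det ≠ 0 := ((isUnit_iff_isUnit_det _).mp hS).ne_zero
  have hA_unit : ∀ᶠ a in l, IsUnit (Uᵀ * (X + d a) * V) :=
    ((continuous_id.matrix_det.tendsto _).comp hA |>.eventually_ne hS_det).mono fun a ha =>
      (isUnit_iff_isUnit_det _).mpr (isUnit_iff_ne_zero.mpr ha)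
  have hA_inv : Tendsto (fun a => (Uᵀ * (X + d a) * V)⁻¹) l (𝓝 (Uᵀ * X * V)⁻¹) := by
    refine (continuousAt_matrix_inv _ ?_).tendsto.comp hA
    simpa [Ring.inverse_eq_inv'] using continuousAt_inv₀ hS_det
  have hlim : Tendsto (fun a => c a • schurComplement Uᵀ (X + d a) V) l
      (𝓝 ((1 - U * Uᵀ) * G * (1 - V * Vᵀ))) := by
    have hF : Continuous fun p : Matrix m n ℝ × Matrix r r ℝ × Matrix m n ℝ =>
        (1 - U * Uᵀ) * p.1 * (1 - V * Vᵀ) -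
          (1 - U * Uᵀ) * p.1 * V * p.2.1 * (Uᵀ * p.2.2 * (1 - V * Vᵀ)) := by fun_prop
    have := (hF.tendsto (G, _, 0)).comp (hcd.prodMk_nhds (hA_inv.prodMk_nhds hd))
    simp only [Matrix.mul_zero, Matrix.zero_mul, sub_zero] at this
    refine this.congr' (hA_unit.mono fun a ha => ?_)
    simp only [Function.comp_apply, schurComplement_add_eq hUX hXV ha, smul_sub, Matrix.smul_mul,
      Matrix.mul_smul]
  show _ ∈ {A : Matrix m n ℝ | A.rank ≤ k - Fintype.card r}
  refine (isClosed_setOf_rank_le _).mem_of_tendsto hlim ?_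
  filter_upwards [hds, hA_unit] with a (hY : _ ≤ k) ha
  have := card_add_rank_schurComplement_le ha
  exact (rank_smul_le _ _).trans (by omega)

end TangentCone

attribute [local instance] Matrix.frobeniusNormedAddCommGroup Matrix.frobeniusNormedSpace

theorem tangent_cone_to_bounded_rank_variety_general
    {m n r k : ℕ} (X : Matrix (Fin m) (Fin n) ℝ) (hrX : X.rank = r) (hrk : r ≤ k)
    (U : Matrix (Fin m) (Fin r) ℝ) (hUX : U * Uᵀ * X = X)
    (V : Matrix (Fin n) (Fin r) ℝ) (hXV : X * (V * Vᵀ) = X) :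
    tangentConeAt ℝ {Y : Matrix (Fin m) (Fin n) ℝ | Y.rank ≤ k} X =
      {G : Matrix (Fin m) (Fin n) ℝ | ((1 - U * Uᵀ) * G * (1 - V * Vᵀ)).rank ≤ k - r} := by
  have hX : X = U * (Uᵀ * X * V) * Vᵀ := by
    rw [← Matrix.mul_assoc, ← Matrix.mul_assoc, hUX, Matrix.mul_assoc, hXV]
  have hS : IsUnit (Uᵀ * X * V) := by
    refine isUnit_of_rank_eq_card (le_antisymm (rank_le_card_width _) ?_)
    calc Fintype.card (Fin r) = X.rank := by rw [hrX, Fintype.card_fin]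
      _ ≤ (U * (Uᵀ * X * V)).rank := by
        conv_lhs => rw [hX]
        exact rank_mul_le_left _ _
      _ ≤ (Uᵀ * X * V).rank := rank_mul_le_right _ _
  have h_sub := tangentConeAt_setOf_rank_le_subset hUX hXV hS k
  have h_supset := subset_tangentConeAt_setOf_rank_le (𝕜 := ℝ) hX hS (k := k)
  rw [Fintype.card_fin] at h_sub h_supset
  exact h_sub.antisymm (h_supset hrk)

theorem tangent_cone_to_bounded_rank_variety
    {m n r k : ℕ} (X : Matrix (Fin m) (Fin n) ℝ) (hrX : X.rank = r) (hrk : r ≤ k)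
    (U : Matrix (Fin m) (Fin r) ℝ) (hU : Uᵀ * U = 1) (hUX : U * Uᵀ * X = X)
    (V : Matrix (Fin n) (Fin r) ℝ) (hV : Vᵀ * V = 1) (hXV : X * (V * Vᵀ) = X) :
    tangentConeAt ℝ {Y : Matrix (Fin m) (Fin n) ℝ | Y.rank ≤ k} X =
      {G : Matrix (Fin m) (Fin n) ℝ | ((1 - U * Uᵀ) * G * (1 - V * Vᵀ)).rank ≤ k - r} :=
  tangent_cone_to_bounded_rank_variety_general X hrX hrk U hUX V hXV
end
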